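/- arXiv:1412.3085 — 2 statements merged into one kernel-verified Lean document; each statement's English description precedes it below -/
import Mathlib

section
/- Let N ≥ 1 and b ∈ [0,π]. Then ((2π)^N N!)^{-1} ∫_{[−b,b]^N} ∏_{1≤i<j≤N} |e^{iθ_i} − e^{iθ_j}|² dθ_1⋯dθ_N = det C[b,N], where C[b,N] is the N×N matrix with entries (C[b,N])_{i,j} = (b/π) · sinc((j−i)b). -/
open MeasureTheory Real

/-- The squared modulus of the Vandermonde determinant of the points `e^{iθ_k}`:
`Δ(θ) = ∏_{1 ≤ i < j ≤ N} |e^{iθ_i} − e^{iθ_j}|²`. -/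
noncomputable def vdm2 {N : ℕ} (θ : Fin N → ℝ) : ℝ :=
  ∏ i : Fin N, ∏ j ∈ Finset.Ioi i,
    ‖Complex.exp ((θ i : ℂ) * Complex.I) - Complex.exp ((θ j : ℂ) * Complex.I)‖ ^ 2

/-- The cardinal sine: `sinc x = sin x / x` for `x ≠ 0`, and `sinc 0 = 1`. -/
noncomputable def sinc (x : ℝ) : ℝ := if x = 0 then 1 else Real.sin x / x

/-!
Writing `v_i = e^{iθ_i}`, `Δ(θ) = |det V|²` for the Vandermonde matrix `V_{ik} = v_i^k`, so
`Δ(θ) = det (conj v_i^j) · det (v_i^k)`. Expanding both determinants over permutations and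
integrating coordinatewise (Andreief's identity) gives
`∫ Δ dμ^N = N! · det (∫ e^{i(k-j)x} dμ(x))_{j,k}` for any finite measure `μ`. For Lebesgue
measure on `[-b, b]` these Fourier coefficients are `2b · sinc((k-j)b)`, and dividing by
`(2π)^N N!` gives the matrix `C[b,N]`.
-/

open Matrix Equiv

namespace Matrix

variable {ι R : Type*} [Fintype ι] [DecidableEq ι] [CommRing R]

theorem sum_perm_sum_perm_sign_mul_sign_smul_prod (M : Matrix ι ι R) :
    ∑ σ : Perm ι, ∑ τ : Perm ι,
        (Perm.sign σ * Perm.sign τ : ℤ) • ∏ i, M (σ i) (τ i)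
      = (Fintype.card ι).factorial • M.det := by
  have inner (σ : Perm ι) :
      ∑ τ : Perm ι, (Perm.sign σ * Perm.sign τ : ℤ) • ∏ i, M (σ i) (τ i) = M.det := by
    -- substituting `τ = ρ * σ`, the two factors `sign σ` cancel
    rw [← det_transpose, det_apply, ← Equiv.sum_comp (Equiv.mulRight σ)]
    refine Finset.sum_congr rfl fun ρ _ => ?_
    rw [Equiv.coe_mulRight, Perm.sign_mul, ← Units.val_mul, mul_comm, mul_assoc,
      Int.units_mul_self, mul_one, ← Units.smul_def]
    exact congrArg _ (Equiv.prod_comp σ fun i => M i (ρ i))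
  simp only [inner, Finset.sum_const, Finset.card_univ, Fintype.card_perm]

theorem det_mul_det_eq_sum_perm {X : Type*} (f g : ι → X → R) (x : ι → X) :
    (of fun i j => f j (x i)).det * (of fun i k => g k (x i)).det
      = ∑ σ : Perm ι, ∑ τ : Perm ι,
          (Perm.sign σ * Perm.sign τ : ℤ) • ∏ i, f (σ i) (x i) * g (τ i) (x i) := by
  rw [← det_transpose, ← det_transpose (of _), det_apply, det_apply, Finset.sum_mul_sum]
  simp only [transpose_apply, of_apply, Units.smul_def, smul_mul_smul_comm,
    Finset.prod_mul_distrib]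

end Matrix

theorem integral_det_mul_det {ι X 𝕜 : Type*} [Fintype ι] [DecidableEq ι] [RCLike 𝕜]
    [MeasurableSpace X] (μ : Measure X) [SigmaFinite μ]
    (f g : ι → X → 𝕜) (hfg : ∀ j k, Integrable (fun x => f j x * g k x) μ) :
    ∫ x, (of fun i j => f j (x i)).det * (of fun i k => g k (x i)).det
        ∂(Measure.pi fun _ => μ)
      = (Fintype.card ι).factorial * (of fun j k => ∫ x, f j x * g k x ∂μ).det := by
  set M := of fun j k => ∫ x, f j x * g k x ∂μ
  have hint (σ τ : Perm ι) : Integrable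
      (fun x : ι → X => ∏ i, f (σ i) (x i) * g (τ i) (x i)) (Measure.pi fun _ => μ) :=
    Integrable.fintype_prod fun i => hfg (σ i) (τ i)
  have hint_smul (σ τ : Perm ι) : Integrable (fun x : ι → X =>
      (Perm.sign σ * Perm.sign τ : ℤ) • ∏ i, f (σ i) (x i) * g (τ i) (x i))
      (Measure.pi fun _ => μ) :=
    (hint σ τ).smul (Perm.sign σ * Perm.sign τ : ℤ)
  have hterm (σ τ : Perm ι) :
      ∫ x, (Perm.sign σ * Perm.sign τ : ℤ) • ∏ i, f (σ i) (x i) * g (τ i) (x i)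
          ∂(Measure.pi fun _ => μ)
        = (Perm.sign σ * Perm.sign τ : ℤ) • ∏ i, M (σ i) (τ i) := by
    rw [(hint σ τ).integral_smul,
      integral_fintype_prod_eq_prod (fun i x => f (σ i) x * g (τ i) x)]
    rfl
  simp_rw [det_mul_det_eq_sum_perm]
  rw [integral_finsetSum _ fun σ _ => integrable_finsetSum _ fun τ _ => hint_smul σ τ]
  simp_rw [integral_finsetSum _ fun τ _ => hint_smul _ τ, hterm]
  rw [← nsmul_eq_mul, sum_perm_sum_perm_sign_mul_sign_smul_prod]

open Complex

local notation "conj" => starRingEnd ℂ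

theorem vdm2_eq_normSq_det_vandermonde {N : ℕ} (θ : Fin N → ℝ) :
    vdm2 θ = normSq (vandermonde fun k => cexp (θ k * I)).det := by
  simp only [vdm2, det_vandermonde, map_prod, normSq_eq_norm_sq, norm_sub_rev]

theorem conj_exp_pow_mul_exp_pow (x : ℝ) (j k : ℕ) :
    conj (cexp (x * I) ^ j) * cexp (x * I) ^ k = cexp (↑(((k : ℝ) - j) * x) * I) := by
  rw [map_pow, ← exp_conj, ← Complex.exp_nat_mul, ← Complex.exp_nat_mul, ← Complex.exp_add]
  congr 1
  simp only [map_mul, conj_ofReal, conj_I]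
  push_cast
  ring

theorem integral_vdm2_pi {N : ℕ} (μ : Measure ℝ) [IsFiniteMeasure μ] :
    ((∫ θ, vdm2 θ ∂(Measure.pi fun _ : Fin N => μ) : ℝ) : ℂ)
      = N.factorial * (of fun j k : Fin N =>
          ∫ x, cexp (↑(((k : ℕ) - (j : ℕ) : ℝ) * x) * I) ∂μ).det := by
  have hint (j k : Fin N) :
      Integrable (fun x : ℝ => cexp (↑(((k : ℕ) - (j : ℕ) : ℝ) * x) * I)) μ :=
    .of_bound (by fun_prop) 1 (.of_forall fun x => (norm_exp_ofReal_mul_I _).le)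
  have hvdm2 (θ : Fin N → ℝ) : (vdm2 θ : ℂ)
      = (of fun i j : Fin N => conj (cexp (θ i * I) ^ (j : ℕ))).det
        * (of fun i k : Fin N => cexp (θ i * I) ^ (k : ℕ)).det := by
    rw [vdm2_eq_normSq_det_vandermonde, normSq_eq_conj_mul_self, RingHom.map_det]
    rfl
  rw [← integral_complex_ofReal]
  simp_rw [hvdm2]
  rw [integral_det_mul_det μ (fun (j : Fin N) x => conj (cexp (x * I) ^ (j : ℕ)))
    (fun (k : Fin N) x => cexp (x * I) ^ (k : ℕ))
    (by simpa only [conj_exp_pow_mul_exp_pow] using hint),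
    Fintype.card_fin]
  simp only [conj_exp_pow_mul_exp_pow]

theorem integral_Icc_exp_ofReal_mul_I {b : ℝ} (hb : 0 ≤ b) (c : ℝ) :
    ∫ x in Set.Icc (-b) b, cexp (↑(c * x) * I) = ↑(2 * b * _root_.sinc (c * b)) := by
  rw [integral_Icc_eq_integral_Ioc, ← intervalIntegral.integral_of_le (by linarith)]
  rcases eq_or_ne c 0 with rfl | hc
  · simp [_root_.sinc, two_mul]
  rcases hb.eq_or_lt with rfl | hb
  · simp
  have hc' : (c : ℂ) ≠ 0 := ofReal_ne_zero.mpr hc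
  have hb' : (b : ℂ) ≠ 0 := ofReal_ne_zero.mpr hb.ne'
  simp_rw [ofReal_mul, mul_right_comm _ _ I]
  rw [integral_exp_mul_complex (mul_ne_zero hc' I_ne_zero), _root_.sinc,
    if_neg (mul_ne_zero hc hb.ne')]
  push_cast
  rw [Complex.sin]
  field_simp
  ring_nf
  simp only [I_sq]
  ring

theorem integral_vdm2_Icc {N : ℕ} {b : ℝ} (hb : 0 ≤ b) :
    ∫ θ in Set.univ.pi (fun _ : Fin N => Set.Icc (-b) b), vdm2 θ
      = N.factorial * (of fun j k : Fin N => 2 * b * _root_.sinc ((k - j : ℝ) * b)).det := by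
  apply ofReal_injective
  rw [volume_pi, Measure.restrict_pi_pi, integral_vdm2_pi]
  simp_rw [integral_Icc_exp_ofReal_mul_I hb]
  rw [ofReal_mul, ofReal_natCast, ← ofRealHom_eq_coe, RingHom.map_det]
  rfl

theorem stmt3_general (N : ℕ) (b : ℝ) (hb : b ∈ Set.Icc (0 : ℝ) π) :
    ((2 * π) ^ N * (Nat.factorial N : ℝ))⁻¹ *
        ∫ θ in Set.univ.pi (fun _ : Fin N => Set.Icc (-b) b), vdm2 θ
      = Matrix.det (Matrix.of fun i j : Fin N =>
          (b / π) * _root_.sinc (((j.val : ℝ) - (i.val : ℝ)) * b)) := by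
  have hC : (of fun i j : Fin N => (b / π) * _root_.sinc (((j.val : ℝ) - (i.val : ℝ)) * b))
      = (2 * π)⁻¹ • of fun j k : Fin N => 2 * b * _root_.sinc ((k - j : ℝ) * b) := by
    ext i j
    simp only [of_apply, Matrix.smul_apply, smul_eq_mul]
    field_simp
  rw [integral_vdm2_Icc hb.1, hC, det_smul, Fintype.card_fin, inv_pow]
  field_simp

/-- For `N ≥ 1` and `b ∈ [0,π]`,
`((2π)^N N!)⁻¹ ∫_{[−b,b]^N} ∏_{i<j} |e^{iθ_i} − e^{iθ_j}|² dθ = det C[b,N]`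
where `(C[b,N])_{i,j} = (b/π)·sinc((j−i)b)`. -/
theorem stmt3 (N : ℕ) (hN : 1 ≤ N) (b : ℝ) (hb : b ∈ Set.Icc (0 : ℝ) π) :
    ((2 * π) ^ N * (Nat.factorial N : ℝ))⁻¹ *
        ∫ θ in Set.univ.pi (fun _ : Fin N => Set.Icc (-b) b), vdm2 θ
      = Matrix.det (Matrix.of fun i j : Fin N =>
          (b / π) * _root_.sinc (((j.val : ℝ) - (i.val : ℝ)) * b)) :=
  stmt3_general N b hb
end

section
/- Fix ε ∈ (0,1) and N ≥ 1. For every integer time t ∈ ℕ with t > N, the strong return probability is exactly P_N(t) = ε^N. -/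
open MeasureTheory Real

/-- The set `Ĩ(t) = {θ ∈ [−π,π] : ∃ m ∈ ℤ, |tθ − 2πm| ≤ πε}` of initial angles whose
time-`t` evolution `e^{itθ}` lies in the arc `{e^{is} : |s| ≤ πε}`. -/
def Itil (ε t : ℝ) : Set ℝ :=
  {θ : ℝ | θ ∈ Set.Icc (-π) π ∧ ∃ m : ℤ, |t * θ - 2 * π * m| ≤ π * ε}

/-- The strong return probability
`P_N(t) = ((2π)^N N!)⁻¹ ∫_{Ĩ(t)^N} ∏_{i<j} |e^{iθ_i} − e^{iθ_j}|² dθ`. -/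
noncomputable def Pstrong (ε : ℝ) (N : ℕ) (t : ℝ) : ℝ :=
  ((2 * π) ^ N * (Nat.factorial N : ℝ))⁻¹ *
    ∫ θ in Set.univ.pi (fun _ : Fin N => Itil ε t), vdm2 θ

/-!
Writing `z_a = e^{iθ_a}`, `Δ(θ) = |det (z_a ^ j)|²`, and expanding both determinants over
permutations makes `Δ` a signed sum of characters `∏_a e^{i(σ a - τ a)θ_a}` with
`|σ a - τ a| < N < t`. The integral over the box `Ĩ(t)^N` factorises. Since `Ĩ(t)` is the
pull-back of the `2π`-periodic set `arcs (πε)` under `θ ↦ tθ`, its Fourier coefficients of order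
`k` with `t ∤ k` vanish (translating by `2π/t` multiplies them by a nontrivial `t`-th root of
unity), while its length is that of one arc, `2πε`. So only `σ = τ` survives, and the integral
is `N! (2πε)^N`.
-/

open Function Set

namespace Function.Periodic

variable {E : Type*} [NormedAddCommGroup E] [NormedSpace ℝ E] {f : ℝ → E} {T : ℝ}

theorem intervalIntegral_comp_natCast_mul (hf : Periodic f T)
    (hfi : ∀ a b, IntervalIntegrable f volume a b) {t : ℕ} (ht : t ≠ 0) (a : ℝ) :
    ∫ x in a..a + T, f (t * x) = ∫ x in a..a + T, f x := by
  have htR : (t : ℝ) ≠ 0 := Nat.cast_ne_zero.mpr ht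
  rw [intervalIntegral.integral_comp_mul_left _ htR,
    show (t : ℝ) * (a + T) = t * a + (t : ℤ) • T by push_cast [zsmul_eq_mul]; ring,
    hf.intervalIntegral_add_zsmul_eq _ _ hfi, hf.intervalIntegral_add_eq (t * a) a,
    ← Int.cast_smul_eq_zsmul ℝ, smul_smul]
  simp [htR]

theorem intervalIntegral_comp_natCast_mul_mul_exp_eq_zero {f : ℝ → ℂ} (hf : Periodic f (2 * π))
    {t : ℕ} (ht : t ≠ 0) {k : ℤ} (hk : ¬ (t : ℤ) ∣ k) :
    ∫ θ in -π..π, f (t * θ) * Complex.exp (k * θ * Complex.I) = 0 := by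
  set g : ℝ → ℂ := fun θ => f (t * θ) * Complex.exp (k * θ * Complex.I)
  set ζ : ℂ := Complex.exp (2 * π * Complex.I / t)
  have hζ : ζ ^ k ≠ 1 := by
    rwa [ne_eq, (Complex.isPrimitiveRoot_exp t ht).zpow_eq_one_iff_dvd]
  have hshift : ∀ θ, g (θ + 2 * π / t) = ζ ^ k * g θ := by
    intro θ
    have htR : (t : ℝ) ≠ 0 := Nat.cast_ne_zero.mpr ht
    simp only [g, ζ, ← Complex.exp_int_mul, mul_add, show (t : ℝ) * (2 * π / t) = 2 * π by
      field_simp, hf (t * θ)]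
    rw [mul_left_comm, ← Complex.exp_add]
    congr 2
    push_cast
    ring
  have hg : Periodic g (2 * π) := by
    intro θ
    simp only [g, mul_add]
    rw [show (t : ℝ) * (2 * π) = (t : ℤ) • (2 * π) by simp, (hf.zsmul t) (t * θ)]
    congr 1
    rw [show (k : ℂ) * ((θ + 2 * π : ℝ) : ℂ) * Complex.I =
      k * θ * Complex.I + k * (2 * π * Complex.I) by push_cast; ring, Complex.exp_add, Complex.exp_int_mul_two_pi_mul_I, mul_one]
  have hinv : ∫ θ in -π..π, g θ = ζ ^ k * ∫ θ in -π..π, g θ := by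
    calc ∫ θ in -π..π, g θ = ∫ θ in -π + 2 * π / t..-π + 2 * π / t + 2 * π, g θ := by
          rw [hg.intervalIntegral_add_eq _ (-π)]; ring_nf
      _ = ∫ θ in -π..π, g (θ + 2 * π / t) := by
          rw [intervalIntegral.integral_comp_add_right]; ring_nf
      _ = ζ ^ k * ∫ θ in -π..π, g θ := by
          simp only [hshift, intervalIntegral.integral_const_mul]
  have h : (1 - ζ ^ k) * ∫ θ in -π..π, g θ = 0 := by rw [one_sub_mul, ← hinv, sub_self]
  exact (mul_eq_zero.mp h).resolve_left (sub_ne_zero.mpr hζ.symm)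

end Function.Periodic

theorem MeasureTheory.setIntegral_univ_pi_prod {ι 𝕜 : Type*} [Fintype ι] [RCLike 𝕜]
    {E : ι → Type*} [∀ i, MeasureSpace (E i)] [∀ i, SigmaFinite (volume : Measure (E i))]
    (s : ∀ i, Set (E i)) (f : ∀ i, E i → 𝕜) :
    ∫ x in univ.pi s, ∏ i, f i (x i) = ∏ i, ∫ x in s i, f i x := by
  rw [volume_pi, Measure.restrict_pi_pi, integral_fintype_prod_eq_prod]

theorem Matrix.det_vandermonde_eq_sum_perm {R : Type*} [CommRing R] {n : ℕ} (v : Fin n → R) :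
    (vandermonde v).det = ∑ σ : Equiv.Perm (Fin n), (σ.sign : ℤ) * ∏ i, v i ^ (σ i : ℕ) := by
  rw [← det_transpose, det_apply']
  simp [vandermonde]

theorem Equiv.Perm.prod_ite_apply_eq {ι R : Type*} [Fintype ι] [DecidableEq ι]
    [CommMonoidWithZero R] (σ τ : Equiv.Perm ι) (c : R) :
    ∏ a, (if σ a = τ a then c else 0) = if σ = τ then c ^ Fintype.card ι else 0 := by
  split_ifs with h
  · simp [h]
  · obtain ⟨a, ha⟩ := not_forall.mp (mt Equiv.ext h)
    exact Finset.prod_eq_zero (Finset.mem_univ a) (if_neg ha)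

def arcs (r : ℝ) : Set ℝ := ⋃ m : ℤ, Metric.closedBall (2 * π * m) r

theorem measurableSet_arcs (r : ℝ) : MeasurableSet (arcs r) :=
  MeasurableSet.iUnion fun _ => measurableSet_closedBall

theorem periodic_indicator_arcs (r : ℝ) : Periodic ((arcs r).indicator (1 : ℝ → ℂ)) (2 * π) := by
  have hmem : ∀ x, x + 2 * π ∈ arcs r ↔ x ∈ arcs r := by
    intro x
    simp only [arcs, mem_iUnion, Metric.mem_closedBall, Real.dist_eq]
    constructor
    · rintro ⟨m, hm⟩
      exact ⟨m - 1, by push_cast; convert hm using 2; ring⟩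
    · rintro ⟨m, hm⟩
      exact ⟨m + 1, by push_cast; convert hm using 2; ring⟩
  intro x
  by_cases hx : x ∈ arcs r
  · simp [hx, (hmem x).mpr hx]
  · simp [hx, mt (hmem x).mp hx]

theorem arcs_inter_Ioc {r : ℝ} (hr : r < π) : arcs r ∩ Ioc (-π) π = Metric.closedBall 0 r := by
  ext x
  simp only [arcs, mem_inter_iff, mem_iUnion, Metric.mem_closedBall, Real.dist_eq, sub_zero,
    mem_Ioc]
  constructor
  · rintro ⟨⟨m, hm⟩, hx₁, hx₂⟩
    obtain rfl : m = 0 := by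
      by_contra hm0
      rcases abs_le.mp hm with ⟨h₁, h₂⟩
      rcases lt_or_gt_of_ne hm0 with h | h
      · have : (m : ℝ) ≤ -1 := by exact_mod_cast Int.le_sub_one_of_lt h
        nlinarith [Real.pi_pos]
      · have : (1 : ℝ) ≤ m := by exact_mod_cast h
        nlinarith [Real.pi_pos]
    simpa using hm
  · intro hx
    obtain ⟨h₁, h₂⟩ := abs_le.mp hx
    exact ⟨⟨0, by simpa using hx⟩, by linarith, by linarith⟩

theorem intervalIntegral_indicator_arcs {r : ℝ} (hr₀ : 0 ≤ r) (hr : r < π) :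
    ∫ x in -π..π, (arcs r).indicator (1 : ℝ → ℂ) x = 2 * r := by
  rw [intervalIntegral.integral_of_le (by linarith [Real.pi_pos]),
    show (1 : ℝ → ℂ) = fun _ => 1 from rfl, integral_indicator_const _ (measurableSet_arcs r)]
  simp [measurableSet_arcs, measureReal_restrict_apply, arcs_inter_Ioc hr,
    Real.volume_real_closedBall hr₀]

theorem Itil_eq_inter_preimage (ε t : ℝ) :
    Itil ε t = Icc (-π) π ∩ (fun θ => t * θ) ⁻¹' arcs (π * ε) := by
  ext θ
  simp [Itil, arcs, Real.dist_eq]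

theorem setIntegral_Itil (ε t : ℝ) (g : ℝ → ℂ) :
    ∫ θ in Itil ε t, g θ = ∫ θ in -π..π, (arcs (π * ε)).indicator 1 (t * θ) * g θ := by
  have hB : MeasurableSet ((fun θ => t * θ) ⁻¹' arcs (π * ε)) :=
    measurable_const_mul t (measurableSet_arcs _)
  rw [Itil_eq_inter_preimage, ← setIntegral_indicator hB, integral_Icc_eq_integral_Ioc,
    ← intervalIntegral.integral_of_le (by linarith [Real.pi_pos])]
  congr 1 with θ
  by_cases hθ : t * θ ∈ arcs (π * ε)
  · simp [indicator_of_mem, hθ]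
  · simp [indicator_of_notMem, hθ]

theorem integral_Itil_exp {ε : ℝ} (hε₀ : 0 ≤ ε) (hε₁ : ε < 1) {t : ℕ} {k : ℤ}
    (hk : |k| < t) :
    ∫ θ in Itil ε t, Complex.exp (k * θ * Complex.I) = if k = 0 then (2 * π * ε : ℂ) else 0 := by
  have ht : t ≠ 0 := by rintro rfl; simp at hk; linarith [abs_nonneg k]
  have hper := periodic_indicator_arcs (π * ε)
  rw [setIntegral_Itil]
  split_ifs with hk0
  · have hint : ∀ a b, IntervalIntegrable ((arcs (π * ε)).indicator (1 : ℝ → ℂ)) volume a b := by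
      intro a b
      have h1 : IntervalIntegrable (fun _ => (1 : ℂ)) volume a b := intervalIntegrable_const
      exact ⟨h1.1.indicator (measurableSet_arcs _), h1.2.indicator (measurableSet_arcs _)⟩
    have hscale := hper.intervalIntegral_comp_natCast_mul hint ht (-π)
    rw [show -π + 2 * π = π by ring] at hscale
    simp only [hk0, Int.cast_zero, zero_mul, Complex.exp_zero, mul_one, hscale]
    rw [intervalIntegral_indicator_arcs (by positivity) (by nlinarith [Real.pi_pos])]
    push_cast; ring
  · refine hper.intervalIntegral_comp_natCast_mul_mul_exp_eq_zero ht fun hdvd => hk0 ?_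
    exact Int.eq_zero_of_abs_lt_dvd hdvd hk

theorem vdm2_eq_normSq_det {N : ℕ} (θ : Fin N → ℝ) :
    vdm2 θ = Complex.normSq (Matrix.vandermonde fun a => Complex.exp (θ a * Complex.I)).det := by
  simp only [vdm2, Matrix.det_vandermonde, map_prod, Complex.normSq_eq_norm_sq, norm_sub_rev]

theorem vdm2_eq_sum_perm {N : ℕ} (θ : Fin N → ℝ) :
    (vdm2 θ : ℂ) = ∑ σ : Equiv.Perm (Fin N), ∑ τ : Equiv.Perm (Fin N),
      ((σ.sign * τ.sign : ℤˣ) : ℤ) *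
        ∏ a, Complex.exp (((σ a : ℕ) - (τ a : ℕ) : ℤ) * θ a * Complex.I) := by
  have hconj : ∀ x : ℝ,
      (starRingEnd ℂ) (Complex.exp (x * Complex.I)) = Complex.exp (-x * Complex.I) := by
    intro x
    rw [← Complex.exp_conj, map_mul, Complex.conj_ofReal, Complex.conj_I]
    ring_nf
  rw [vdm2_eq_normSq_det, ← Complex.mul_conj, Matrix.det_vandermonde_eq_sum_perm, map_sum,
    Finset.sum_mul_sum]
  refine Finset.sum_congr rfl fun σ _ => Finset.sum_congr rfl fun τ _ => ?_
  simp only [map_mul, map_prod, map_pow, map_intCast, hconj, Units.val_mul, Int.cast_mul]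
  rw [mul_mul_mul_comm, ← Finset.prod_mul_distrib]
  congr 1
  refine Finset.prod_congr rfl fun a _ => ?_
  rw [← Complex.exp_nat_mul, ← Complex.exp_nat_mul, ← Complex.exp_add]
  congr 1
  push_cast
  ring

theorem integral_vdm2_Itil {ε : ℝ} (hε₀ : 0 ≤ ε) (hε₁ : ε < 1) {N t : ℕ} (hNt : N < t) :
    ∫ θ in univ.pi (fun _ : Fin N => Itil ε t), vdm2 θ = N.factorial * (2 * π * ε) ^ N := by
  set e : Equiv.Perm (Fin N) → Equiv.Perm (Fin N) → (Fin N → ℝ) → ℂ := fun σ τ θ =>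
    ∏ a, Complex.exp (((σ a : ℕ) - (τ a : ℕ) : ℤ) * θ a * Complex.I)
  have hint : ∀ σ τ, IntegrableOn (e σ τ) (univ.pi fun _ => Itil ε t) := fun σ τ =>
    (ContinuousOn.integrableOn_compact (isCompact_univ_pi fun _ => isCompact_Icc)
      (by fun_prop)).mono_set (pi_mono fun _ _ θ hθ => hθ.1)
  have hterm : ∀ σ τ, ∫ θ in univ.pi (fun _ : Fin N => Itil ε t), e σ τ θ =
      if σ = τ then (2 * π * ε : ℂ) ^ N else 0 := by
    intro σ τ
    rw [setIntegral_univ_pi_prod (fun _ => Itil ε t) fun a x =>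
      Complex.exp (((σ a : ℕ) - (τ a : ℕ) : ℤ) * x * Complex.I)]
    calc _ = ∏ a, if σ a = τ a then (2 * π * ε : ℂ) else 0 := by
          refine Finset.prod_congr rfl fun a _ => ?_
          have hk : |((σ a : ℕ) - (τ a : ℕ) : ℤ)| < t := by
            have := (σ a).isLt; have := (τ a).isLt
            rw [abs_lt]; omega
          rw [integral_Itil_exp hε₀ hε₁ hk]
          simp only [sub_eq_zero, Nat.cast_inj, Fin.val_inj]
      _ = _ := by rw [Equiv.Perm.prod_ite_apply_eq, Fintype.card_fin]
  suffices h : ∫ θ in univ.pi (fun _ : Fin N => Itil ε t), (vdm2 θ : ℂ) =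
      N.factorial * (2 * π * ε) ^ N by
    rw [integral_complex_ofReal] at h
    exact_mod_cast h
  simp_rw [vdm2_eq_sum_perm]
  rw [integral_finsetSum _ fun σ _ => integrable_finsetSum _ fun τ _ => (hint σ τ).const_mul _,
    Finset.sum_congr rfl fun σ _ => integral_finsetSum _ fun τ _ => (hint σ τ).const_mul _]
  simp only [integral_const_mul, e, hterm, mul_ite, mul_zero, Finset.sum_ite_eq, Finset.mem_univ,
    if_true, Int.units_mul_self, Units.val_one, Int.cast_one, one_mul, Finset.sum_const,
    Finset.card_univ, Fintype.card_perm, Fintype.card_fin, nsmul_eq_mul]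

theorem stmt9_general (ε : ℝ) (hε : ε ∈ Set.Ioo (0 : ℝ) 1) (N : ℕ)
    (t : ℕ) (ht : N < t) :
    Pstrong ε N (t : ℝ) = ε ^ N := by
  rw [Pstrong, integral_vdm2_Itil hε.1.le hε.2 ht, mul_pow]
  field_simp
  ring

/-- For `ε ∈ (0,1)`, `N ≥ 1`, and every integer time `t > N`,
the strong return probability is exactly `P_N(t) = ε^N`. -/
theorem stmt9 (ε : ℝ) (hε : ε ∈ Set.Ioo (0 : ℝ) 1) (N : ℕ) (hN : 1 ≤ N)
    (t : ℕ) (ht : N < t) :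
    Pstrong ε N (t : ℝ) = ε ^ N :=
  stmt9_general ε hε N t ht
end
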